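/- Let T̂ and T be deterministic dynamics on a metric space (S,d), let r be bounded and the value function V_M^π be L-Lipschitz. Then η_M(π̂) ≥ sup_π { η_M(π) − 2γL · Ē_{(s,a)∼ρ^π_{T̂}}[ d(t̂(s,a), t(s,a)) ] }, where π̂ maximizes the penalized return with penalty λu(s,a) = γL·d(t̂(s,a), t(s,a)). -/

import Mathlib

/-!
Write ρ for the discounted occupancy of π under the model T̂ and V for the true value
function of π. The occupancy obeys the flow equation
`∑ₐ ρ(s', a) = μ₀(s') + γ ∑_{s,a} ρ(s, a) T̂(s' | s, a)` and V obeys the Bellman equation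
under T; pairing the first against V and the second against ρ gives the simulation identity
`η_M(π) = Ē_ρ[r] - γ Ē_ρ[G^π]` as a finite computation, without telescoping limits.
With deterministic dynamics `G^π(s, a) = V(t̂(s, a)) - V(t(s, a))`, so the Lipschitz bound gives
`γ |G^π| ≤ γ L d(t̂, t) = u`: the model return `Ē_ρ[r]` is within `Ē_ρ[u]` of the true return
for every policy, and comparing π̂ with π through the penalized objective costs twice that.
-/

open scoped BigOperators
open Filter Topology Classical

section MDP

variable {S A : Type*} [Fintype S] [Fintype A]

/-- π is a valid stochastic policy. -/
def IsPolicy (π : S → A → ℝ) : Prop :=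
  (∀ s a, 0 ≤ π s a) ∧ ∀ s, ∑ a, π s a = 1

/-- T is a valid transition kernel. -/
def IsKernel (T : S → A → S → ℝ) : Prop :=
  (∀ s a s', 0 ≤ T s a s') ∧ ∀ s a, ∑ s', T s a s' = 1

/-- μ is a probability distribution on states. -/
def IsDist (μ : S → ℝ) : Prop :=
  (∀ s, 0 ≤ μ s) ∧ ∑ s, μ s = 1

/-- Distribution of the state at time t under policy π and dynamics T, from μ0. -/
def stateDist (T : S → A → S → ℝ) (π : S → A → ℝ) (μ0 : S → ℝ) : ℕ → S → ℝ
  | 0 => μ0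
  | t + 1 => fun s' => ∑ s, ∑ a, stateDist T π μ0 t s * π s a * T s a s'

/-- Unnormalized discounted occupancy measure ρ^π_T(s,a). -/
noncomputable def occupancy (γ : ℝ) (T : S → A → S → ℝ) (π : S → A → ℝ)
    (μ0 : S → ℝ) (s : S) (a : A) : ℝ :=
  π s a * ∑' t : ℕ, γ ^ t * stateDist T π μ0 t s

/-- Improper expectation Ē of f with respect to the occupancy measure. -/
noncomputable def expOcc (γ : ℝ) (T : S → A → S → ℝ) (π : S → A → ℝ)
    (μ0 : S → ℝ) (f : S → A → ℝ) : ℝ :=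
  ∑ s, ∑ a, occupancy γ T π μ0 s a * f s a

/-- Expected discounted return η_M(π). -/
noncomputable def ret (γ : ℝ) (T : S → A → S → ℝ) (π : S → A → ℝ)
    (μ0 : S → ℝ) (r : S → A → ℝ) : ℝ :=
  ∑' t : ℕ, γ ^ t * ∑ s, ∑ a, stateDist T π μ0 t s * π s a * r s a

/-- Value function V_M^π(s): return starting from the Dirac distribution at s. -/
noncomputable def value (γ : ℝ) (T : S → A → S → ℝ) (π : S → A → ℝ)
    (r : S → A → ℝ) (s0 : S) : ℝ :=
  ret γ T π (fun s => if s = s0 then 1 else 0) r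

/-- G^π(s,a) = E_{s'∼T̂(s,a)}[V_M^π(s')] − E_{s'∼T(s,a)}[V_M^π(s')]. -/
noncomputable def Gpi (γ : ℝ) (T Th : S → A → S → ℝ) (π : S → A → ℝ)
    (r : S → A → ℝ) (s : S) (a : A) : ℝ :=
  (∑ s', Th s a s' * value γ T π r s') - ∑ s', T s a s' * value γ T π r s'

/-- Total variation distance between two distributions on a finite set. -/
noncomputable def tvDist (P Q : S → ℝ) : ℝ :=
  ⨆ E : Finset S, |(∑ s ∈ E, P s) - ∑ s ∈ E, Q s|

/-- Integral probability metric induced by a function class F. -/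
noncomputable def ipm (F : Set (S → ℝ)) (P Q : S → ℝ) : ℝ :=
  sSup {x : ℝ | ∃ f ∈ F, x = |(∑ s, P s * f s) - ∑ s, Q s * f s|}

section Occupancy

open Finset

variable {γ : ℝ} {T Th : S → A → S → ℝ} {π : S → A → ℝ} {μ0 : S → ℝ}

theorem sum_sum_sum_comm {X Y Z M : Type*} [Fintype X] [Fintype Y] [Fintype Z]
    [AddCommMonoid M] (f : X → Y → Z → M) : ∑ x, ∑ y, ∑ z, f x y z = ∑ z, ∑ x, ∑ y, f x y z :=
  (sum_congr rfl fun _ _ => sum_comm).trans sum_comm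

theorem sum_push_mul (w : S → A → ℝ) (K : S → A → S → ℝ) (g : S → ℝ) :
    ∑ s', (∑ s, ∑ a, w s a * K s a s') * g s' = ∑ s, ∑ a, w s a * ∑ s', K s a s' * g s' := by
  simp only [sum_mul, mul_sum, mul_assoc]
  exact (sum_sum_sum_comm _).symm

theorem IsDist.le_one {μ : S → ℝ} (hμ : IsDist μ) (s : S) : μ s ≤ 1 :=
  hμ.2 ▸ single_le_sum (fun i _ => hμ.1 i) (mem_univ s)

theorem isDist_pointMass (s₀ : S) : IsDist fun s => if s = s₀ then (1 : ℝ) else 0 :=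
  ⟨fun s => by dsimp only; split_ifs <;> norm_num, by simp⟩

omit [Fintype A] in
theorem IsKernel.of_deterministic {t : S → A → S}
    (hT : ∀ s a s', T s a s' = if s' = t s a then (1 : ℝ) else 0) : IsKernel T :=
  ⟨fun s a s' => by rw [hT]; split_ifs <;> norm_num, fun s a => by simp [hT]⟩

theorem isDist_stateDist (hT : IsKernel T) (hπ : IsPolicy π) (hμ : IsDist μ0) (t : ℕ) :
    IsDist (stateDist T π μ0 t) := by
  induction t with
  | zero => exact hμ
  | succ t ih =>
    refine ⟨fun s' => sum_nonneg fun s _ => sum_nonneg fun a _ =>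
      mul_nonneg (mul_nonneg (ih.1 s) (hπ.1 s a)) (hT.1 s a s'), ?_⟩
    calc ∑ s', stateDist T π μ0 (t + 1) s' = ∑ s', stateDist T π μ0 (t + 1) s' * 1 := by simp
      _ = ∑ s, ∑ a, stateDist T π μ0 t s * π s a * ∑ s', T s a s' * 1 := sum_push_mul _ T _
      _ = 1 := by simp [hT.2, ← mul_sum, hπ.2, ih.2]

theorem stateDist_succ' (t : ℕ) :
    stateDist T π μ0 (t + 1) = stateDist T π (stateDist T π μ0 1) t := by
  induction t with
  | zero => rfl
  | succ t ih =>
    funext s'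
    show ∑ s, ∑ a, stateDist T π μ0 (t + 1) s * π s a * T s a s' = _
    rw [ih]
    rfl

theorem stateDist_eq_sum_mul_stateDist_pointMass (t : ℕ) (s' : S) :
    stateDist T π μ0 t s'
      = ∑ s, μ0 s * stateDist T π (fun x => if x = s then 1 else 0) t s' := by
  induction t generalizing s' with
  | zero => simp [stateDist]
  | succ t ih =>
    show ∑ s, ∑ a, stateDist T π μ0 t s * π s a * T s a s' = _
    simp only [stateDist, ih, sum_mul, mul_sum, mul_assoc]
    exact sum_sum_sum_comm _

theorem summable_discounted_stateDist (hγ0 : 0 ≤ γ) (hγ1 : γ < 1) (hT : IsKernel T)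
    (hπ : IsPolicy π) (hμ : IsDist μ0) (s : S) :
    Summable fun t => γ ^ t * stateDist T π μ0 t s :=
  (summable_geometric_of_lt_one hγ0 hγ1).of_nonneg_of_le
    (fun t => mul_nonneg (pow_nonneg hγ0 t) ((isDist_stateDist hT hπ hμ t).1 s))
    (fun t => mul_le_of_le_one_right (pow_nonneg hγ0 t) ((isDist_stateDist hT hπ hμ t).le_one s))

theorem summable_ret (hγ0 : 0 ≤ γ) (hγ1 : γ < 1) (hT : IsKernel T) (hπ : IsPolicy π)
    (hμ : IsDist μ0) (f : S → A → ℝ) :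
    Summable fun t => γ ^ t * ∑ s, ∑ a, stateDist T π μ0 t s * π s a * f s a := by
  simp_rw [mul_sum]
  refine summable_sum fun s _ => summable_sum fun a _ => ?_
  simpa only [mul_assoc] using
    (summable_discounted_stateDist hγ0 hγ1 hT hπ hμ s).mul_right (π s a * f s a)

theorem ret_eq_add_ret_stateDist_one (hγ0 : 0 ≤ γ) (hγ1 : γ < 1) (hT : IsKernel T)
    (hπ : IsPolicy π) (hμ : IsDist μ0) (f : S → A → ℝ) :
    ret γ T π μ0 f
      = ∑ s, ∑ a, μ0 s * π s a * f s a + γ * ret γ T π (stateDist T π μ0 1) f := by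
  rw [ret, (summable_ret hγ0 hγ1 hT hπ hμ f).tsum_eq_zero_add, ret, ← tsum_mul_left]
  congr 1
  · simp [stateDist]
  · exact tsum_congr fun t => by rw [stateDist_succ', pow_succ]; ring

theorem ret_eq_sum_mul_value (hγ0 : 0 ≤ γ) (hγ1 : γ < 1) (hT : IsKernel T)
    (hπ : IsPolicy π) (μ : S → ℝ) (r : S → A → ℝ) :
    ret γ T π μ r = ∑ s, μ s * value γ T π r s := by
  have h : HasSum (fun t => ∑ s, μ s * (γ ^ t * ∑ s', ∑ a,
      stateDist T π (fun x => if x = s then 1 else 0) t s' * π s' a * r s' a))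
      (∑ s, μ s * value γ T π r s) :=
    hasSum_sum fun s _ => (summable_ret hγ0 hγ1 hT hπ (isDist_pointMass s) r).hasSum.mul_left (μ s)
  rw [← h.tsum_eq]
  refine tsum_congr fun t => ?_
  simp only [stateDist_eq_sum_mul_stateDist_pointMass (μ0 := μ) t, sum_mul, mul_sum]
  rw [sum_sum_sum_comm]
  exact sum_congr rfl fun _ _ => sum_congr rfl fun _ _ =>
    sum_congr rfl fun _ _ => by ring

theorem value_eq_bellman (hγ0 : 0 ≤ γ) (hγ1 : γ < 1) (hT : IsKernel T) (hπ : IsPolicy π)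
    (r : S → A → ℝ) (s₀ : S) :
    value γ T π r s₀ = ∑ a, π s₀ a * (r s₀ a + γ * ∑ s', T s₀ a s' * value γ T π r s') := by
  rw [value, ret_eq_add_ret_stateDist_one hγ0 hγ1 hT hπ (isDist_pointMass s₀),
    ret_eq_sum_mul_value hγ0 hγ1 hT hπ, stateDist, stateDist, sum_push_mul]
  simp [mul_add, sum_add_distrib, mul_sum, mul_left_comm γ]

theorem sum_occupancy_flow (hγ0 : 0 ≤ γ) (hγ1 : γ < 1) (hT : IsKernel T) (hπ : IsPolicy π)
    (hμ : IsDist μ0) (s' : S) :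
    ∑ a, occupancy γ T π μ0 s' a
      = μ0 s' + γ * ∑ s, ∑ a, occupancy γ T π μ0 s a * T s a s' := by
  have hsum := summable_discounted_stateDist hγ0 hγ1 hT hπ hμ
  simp only [occupancy, ← sum_mul, hπ.2, one_mul]
  rw [(hsum s').tsum_eq_zero_add]
  congr 1
  · simp [stateDist]
  · have h : HasSum (fun t => ∑ s, ∑ a, π s a * (γ ^ t * stateDist T π μ0 t s) * T s a s')
        (∑ s, ∑ a, (π s a * ∑' t, γ ^ t * stateDist T π μ0 t s) * T s a s') :=
      hasSum_sum fun s _ => hasSum_sum fun a _ => ((hsum s).hasSum.mul_left _).mul_right _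
    rw [← h.tsum_eq, ← tsum_mul_left]
    refine tsum_congr fun t => ?_
    simp only [stateDist, mul_sum]
    exact sum_congr rfl fun _ _ => sum_congr rfl fun _ _ => by ring

theorem occupancy_nonneg (hγ0 : 0 ≤ γ) (hT : IsKernel T) (hπ : IsPolicy π) (hμ : IsDist μ0)
    (s : S) (a : A) : 0 ≤ occupancy γ T π μ0 s a :=
  mul_nonneg (hπ.1 s a) (tsum_nonneg fun t =>
    mul_nonneg (pow_nonneg hγ0 t) ((isDist_stateDist hT hπ hμ t).1 s))

theorem expOcc_mono (hγ0 : 0 ≤ γ) (hT : IsKernel T) (hπ : IsPolicy π) (hμ : IsDist μ0)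
    {f g : S → A → ℝ} (h : ∀ s a, f s a ≤ g s a) : expOcc γ T π μ0 f ≤ expOcc γ T π μ0 g :=
  sum_le_sum fun s _ => sum_le_sum fun a _ =>
    mul_le_mul_of_nonneg_left (h s a) (occupancy_nonneg hγ0 hT hπ hμ s a)

theorem abs_expOcc_le (hγ0 : 0 ≤ γ) (hT : IsKernel T) (hπ : IsPolicy π) (hμ : IsDist μ0)
    (f : S → A → ℝ) : |expOcc γ T π μ0 f| ≤ expOcc γ T π μ0 fun s a => |f s a| := by
  calc |expOcc γ T π μ0 f| ≤ ∑ s, ∑ a, |occupancy γ T π μ0 s a * f s a| :=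
        (abs_sum_le_sum_abs _ _).trans
          (sum_le_sum fun s _ => abs_sum_le_sum_abs _ _)
    _ = expOcc γ T π μ0 fun s a => |f s a| := by
        simp only [abs_mul, abs_of_nonneg (occupancy_nonneg hγ0 hT hπ hμ _ _), expOcc]

theorem expOcc_const_mul (c : ℝ) (f : S → A → ℝ) :
    expOcc γ T π μ0 (fun s a => c * f s a) = c * expOcc γ T π μ0 f := by
  simp only [expOcc, mul_sum, mul_left_comm c]

theorem expOcc_sub (f g : S → A → ℝ) :
    expOcc γ T π μ0 (fun s a => f s a - g s a) = expOcc γ T π μ0 f - expOcc γ T π μ0 g := by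
  simp only [expOcc, mul_sub, sum_sub_distrib]

theorem sum_mul_eq_of_flow_of_bellman {ρ : S → A → ℝ} {V : S → ℝ} (r : S → A → ℝ)
    (hflow : ∀ s', ∑ a, ρ s' a = μ0 s' + γ * ∑ s, ∑ a, ρ s a * Th s a s')
    (hbellman : ∀ s, (∑ a, ρ s a) * V s = ∑ a, ρ s a * (r s a + γ * ∑ s', T s a s' * V s')) :
    ∑ s, μ0 s * V s = ∑ s, ∑ a, ρ s a * r s a
      - γ * ∑ s, ∑ a, ρ s a * ((∑ s', Th s a s' * V s') - ∑ s', T s a s' * V s') := by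
  calc ∑ s, μ0 s * V s
      = ∑ s, (∑ a, ρ s a) * V s - γ * ∑ s', (∑ s, ∑ a, ρ s a * Th s a s') * V s' := by
        simp only [hflow, add_mul, sum_add_distrib, mul_assoc, ← mul_sum]
        ring
    _ = _ := by
      rw [sum_push_mul]
      simp only [hbellman, mul_add, mul_sub, sum_add_distrib, sum_sub_distrib,
        mul_left_comm _ γ, ← mul_sum]
      ring

theorem ret_eq_expOcc_sub_expOcc_Gpi (hγ0 : 0 ≤ γ) (hγ1 : γ < 1) (hT : IsKernel T)
    (hTh : IsKernel Th) (hπ : IsPolicy π) (hμ : IsDist μ0) (r : S → A → ℝ) :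
    ret γ T π μ0 r = expOcc γ Th π μ0 r - γ * expOcc γ Th π μ0 (Gpi γ T Th π r) := by
  rw [ret_eq_sum_mul_value hγ0 hγ1 hT hπ]
  refine sum_mul_eq_of_flow_of_bellman r (sum_occupancy_flow hγ0 hγ1 hTh hπ hμ) fun s => ?_
  simp only [occupancy, ← sum_mul, hπ.2, one_mul]
  rw [value_eq_bellman hγ0 hγ1 hT hπ r s, mul_sum]
  exact sum_congr rfl fun a _ => by ring

theorem abs_ret_sub_expOcc_le (hγ0 : 0 ≤ γ) (hγ1 : γ < 1) (hT : IsKernel T)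
    (hTh : IsKernel Th) (hπ : IsPolicy π) (hμ : IsDist μ0) {r u : S → A → ℝ}
    (hu : ∀ s a, γ * |Gpi γ T Th π r s a| ≤ u s a) :
    |ret γ T π μ0 r - expOcc γ Th π μ0 r| ≤ expOcc γ Th π μ0 u := by
  rw [ret_eq_expOcc_sub_expOcc_Gpi hγ0 hγ1 hT hTh hπ hμ, sub_sub_cancel_left, abs_neg,
    ← expOcc_const_mul]
  refine (abs_expOcc_le hγ0 hTh hπ hμ _).trans (expOcc_mono hγ0 hTh hπ hμ fun s a => ?_)
  rw [abs_mul, abs_of_nonneg hγ0]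
  exact hu s a

theorem ret_sub_le_ret_of_penalized_optimal {r u : S → A → ℝ} (hγ0 : 0 ≤ γ) (hγ1 : γ < 1)
    (hT : IsKernel T) (hTh : IsKernel Th) (hμ : IsDist μ0)
    (hu : ∀ π, IsPolicy π → ∀ s a, γ * |Gpi γ T Th π r s a| ≤ u s a)
    {πhat : S → A → ℝ} (hπhat : IsPolicy πhat)
    (hopt : ∀ π, IsPolicy π → expOcc γ Th π μ0 (fun s a => r s a - u s a)
      ≤ expOcc γ Th πhat μ0 (fun s a => r s a - u s a))
    (hπ : IsPolicy π) :
    ret γ T π μ0 r - 2 * expOcc γ Th π μ0 u ≤ ret γ T πhat μ0 r := by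
  have hhat := abs_le.1 (abs_ret_sub_expOcc_le hγ0 hγ1 hT hTh hπhat hμ (hu πhat hπhat))
  have hother := abs_le.1 (abs_ret_sub_expOcc_le hγ0 hγ1 hT hTh hπ hμ (hu π hπ))
  have hmax := hopt π hπ
  rw [expOcc_sub, expOcc_sub] at hmax
  linarith [hhat.1, hother.2]

theorem Gpi_of_deterministic {r : S → A → ℝ} {t th : S → A → S}
    (hT : ∀ s a s', T s a s' = if s' = t s a then (1 : ℝ) else 0)
    (hTh : ∀ s a s', Th s a s' = if s' = th s a then (1 : ℝ) else 0) (s : S) (a : A) :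
    Gpi γ T Th π r s a = value γ T π r (th s a) - value γ T π r (t s a) := by
  simp [Gpi, hT, hTh]

end Occupancy

theorem mopo_deterministic_lipschitz_general {S A : Type*} [Fintype S] [Fintype A] [MetricSpace S]
    (γ : ℝ) (hγ0 : 0 < γ) (hγ1 : γ < 1)
    (tm that : S → A → S) (T Th : S → A → S → ℝ)
    (hTdet : ∀ s a s', T s a s' = if s' = tm s a then (1 : ℝ) else 0)
    (hThdet : ∀ s a s', Th s a s' = if s' = that s a then (1 : ℝ) else 0)
    (μ0 : S → ℝ) (hμ : IsDist μ0) (r : S → A → ℝ)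
    (L : ℝ)
    (hLip : ∀ π : S → A → ℝ, IsPolicy π →
      ∀ x y : S, |value γ T π r x - value γ T π r y| ≤ L * dist x y)
    (πhat : S → A → ℝ) (hπhat : IsPolicy πhat)
    (hopt : ∀ π : S → A → ℝ, IsPolicy π →
      expOcc γ Th π μ0 (fun s a => r s a - γ * L * dist (that s a) (tm s a))
        ≤ expOcc γ Th πhat μ0 (fun s a => r s a - γ * L * dist (that s a) (tm s a))) :
    ∀ π : S → A → ℝ, IsPolicy π →
      ret γ T πhat μ0 r
        ≥ ret γ T π μ0 r
          - 2 * γ * L * expOcc γ Th π μ0 (fun s a => dist (that s a) (tm s a)) := by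
  intro π hπ
  have hpenalty : ∀ p, IsPolicy p → ∀ s a,
      γ * |Gpi γ T Th p r s a| ≤ γ * L * dist (that s a) (tm s a) := fun p hp s a => by
    rw [Gpi_of_deterministic hTdet hThdet, mul_assoc]
    exact mul_le_mul_of_nonneg_left (hLip p hp _ _) hγ0.le
  have h := ret_sub_le_ret_of_penalized_optimal hγ0.le hγ1 (IsKernel.of_deterministic hTdet)
    (IsKernel.of_deterministic hThdet) hμ hpenalty hπhat hopt hπ
  rw [expOcc_const_mul] at h
  linarith

/-- MOPO with deterministic dynamics and Lipschitz values: the Wasserstein instantiation. -/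
theorem mopo_deterministic_lipschitz {S A : Type*} [Fintype S] [Fintype A] [MetricSpace S]
    (γ : ℝ) (hγ0 : 0 < γ) (hγ1 : γ < 1)
    (tm that : S → A → S) (T Th : S → A → S → ℝ)
    (hTdet : ∀ s a s', T s a s' = if s' = tm s a then (1 : ℝ) else 0)
    (hThdet : ∀ s a s', Th s a s' = if s' = that s a then (1 : ℝ) else 0)
    (μ0 : S → ℝ) (hμ : IsDist μ0) (r : S → A → ℝ)
    (rmax : ℝ) (hr : ∀ s a, |r s a| ≤ rmax)
    (L : ℝ) (hL : 0 ≤ L)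
    (hLip : ∀ π : S → A → ℝ, IsPolicy π →
      ∀ x y : S, |value γ T π r x - value γ T π r y| ≤ L * dist x y)
    (πhat : S → A → ℝ) (hπhat : IsPolicy πhat)
    (hopt : ∀ π : S → A → ℝ, IsPolicy π →
      expOcc γ Th π μ0 (fun s a => r s a - γ * L * dist (that s a) (tm s a))
        ≤ expOcc γ Th πhat μ0 (fun s a => r s a - γ * L * dist (that s a) (tm s a))) :
    ∀ π : S → A → ℝ, IsPolicy π →
      ret γ T πhat μ0 r
        ≥ ret γ T π μ0 r
          - 2 * γ * L * expOcc γ Th π μ0 (fun s a => dist (that s a) (tm s a)) :=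
  mopo_deterministic_lipschitz_general γ hγ0 hγ1 tm that T Th hTdet hThdet μ0 hμ r L hLip πhat hπhat
    hopt

end MDP
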